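/- The function q(t) = A·sinh(μ(1 + 3εA²/(8μ²))t) - (εA³/(32μ²))·sinh(3μt) satisfies the residual identity: q''(t) - μ²q(t) + εq(t)³ = O(ε²) uniformly on compact t-intervals as ε → 0; precisely, there is a function R(t,ε), polynomial in ε with coefficients built from sinh and cosh of multiples of μt (bounded on compacts), such that q'' - μ²q + εq³ = ε²·R(t,ε). -/

import Mathlib

/-!
Expanding the cube with `sinh³ x = (sinh 3x - 3 sinh x) / 4`, the frequency shift `m` is exactly
what cancels the order-`ε` multiples of `sinh (μ m t)`, and the correction mode
`-(ε A³ / (32 μ²)) sinh (3 μ t)` cancels the order-`ε` harmonic up to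
`(ε A³ / 4) (sinh (3 μ m t) - sinh (3 μ t))`. Since `3 μ m t - 3 μ t = O(ε t)` and `sinh` is
Lipschitz on bounded sets, that term is `O(ε²)` on compacts; everything else is `ε²` times a
polynomial in `ε`, `sinh (μ m t)` and `sinh (3 μ t)`, bounded by compactness.
-/

open Real Set

lemma abs_sinh_sub_sinh_le {M x y : ℝ} (hx : |x| ≤ M) (hy : |y| ≤ M) :
    |sinh x - sinh y| ≤ cosh M * |x - y| := by
  have hderiv : ∀ z ∈ Icc (-M) M, ‖cosh z‖ ≤ cosh M := fun z hz => by
    rw [norm_eq_abs, abs_of_pos (cosh_pos z), cosh_le_cosh,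
      abs_of_nonneg ((abs_nonneg x).trans hx)]
    exact abs_le.2 hz
  simpa only [norm_eq_abs] using
    (convex_Icc (-M) M).norm_image_sub_le_of_norm_hasDerivWithin_le
      (fun z _ => (hasDerivAt_sinh z).hasDerivWithinAt) hderiv (abs_le.1 hy) (abs_le.1 hx)

lemma abs_sinh_add_mul_sub_sinh_le {μ κ ε t K : ℝ} (hμ : 0 ≤ μ) (hκ : 0 ≤ κ)
    (hε₀ : 0 ≤ ε) (hε₁ : ε ≤ 1) (ht : |t| ≤ K) :
    |sinh ((μ + ε * κ) * t) - sinh (μ * t)| ≤ ε * (κ * K * cosh ((μ + κ) * K)) := by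
  have hεκ : ε * κ ≤ κ := mul_le_of_le_one_left hκ hε₁
  have hx : |(μ + ε * κ) * t| ≤ (μ + κ) * K := by
    rw [abs_mul, abs_of_nonneg (by positivity)]
    exact mul_le_mul (by linarith) ht (abs_nonneg t) (by positivity)
  have hy : |μ * t| ≤ (μ + κ) * K := by
    rw [abs_mul, abs_of_nonneg hμ]
    exact mul_le_mul (by linarith) ht (abs_nonneg t) (by positivity)
  calc |sinh ((μ + ε * κ) * t) - sinh (μ * t)|
      ≤ cosh ((μ + κ) * K) * |(μ + ε * κ) * t - μ * t| := abs_sinh_sub_sinh_le hx hy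
    _ = cosh ((μ + κ) * K) * (ε * κ * |t|) := by
        rw [show (μ + ε * κ) * t - μ * t = ε * κ * t by ring, abs_mul,
          abs_of_nonneg (by positivity)]
    _ ≤ cosh ((μ + κ) * K) * (ε * κ * K) := by gcongr
    _ = ε * (κ * K * cosh ((μ + κ) * K)) := by ring

lemma deriv_deriv_mul_sinh_sub_mul_sinh (a b c d : ℝ) :
    deriv (deriv fun t => a * sinh (c * t) - b * sinh (d * t))
      = fun t => a * c ^ 2 * sinh (c * t) - b * d ^ 2 * sinh (d * t) := by
  have hlin : ∀ (k t : ℝ), HasDerivAt (fun t => k * t) k t := fun k t => by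
    simpa using (hasDerivAt_id t).const_mul k
  have h₁ : deriv (fun t => a * sinh (c * t) - b * sinh (d * t))
      = fun t => a * c * cosh (c * t) - b * d * cosh (d * t) := by
    funext t
    exact ((((hlin c t).sinh.const_mul a).sub ((hlin d t).sinh.const_mul b))).deriv.trans
      (by ring)
  rw [h₁]
  funext t
  exact ((((hlin c t).cosh.const_mul (a * c)).sub ((hlin d t).cosh.const_mul (b * d)))).deriv.trans
    (by ring)

noncomputable def twoModeRemainder (μ A ε s₁ s₃ : ℝ) : ℝ :=
  9 * A ^ 5 / (64 * μ ^ 2) * s₁ - 3 * A ^ 5 / (32 * μ ^ 2) * s₁ ^ 2 * s₃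
    + ε * (3 * A ^ 7 / (1024 * μ ^ 4)) * s₁ * s₃ ^ 2 - ε ^ 2 * (A ^ 9 / (32768 * μ ^ 6)) * s₃ ^ 3

lemma two_mode_residual_eq {μ : ℝ} (hμ : μ ≠ 0) (A ε x y : ℝ) :
    A * (μ * (1 + 3 * ε * A ^ 2 / (8 * μ ^ 2))) ^ 2 * sinh x
        - ε * A ^ 3 / (32 * μ ^ 2) * (3 * μ) ^ 2 * sinh y
        - μ ^ 2 * (A * sinh x - ε * A ^ 3 / (32 * μ ^ 2) * sinh y)
        + ε * (A * sinh x - ε * A ^ 3 / (32 * μ ^ 2) * sinh y) ^ 3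
      = ε ^ 2 * twoModeRemainder μ A ε (sinh x) (sinh y)
        + ε * A ^ 3 / 4 * (sinh (3 * x) - sinh y) := by
  rw [sinh_three_mul, twoModeRemainder]
  field_simp
  ring

lemma exists_bound_twoModeRemainder (μ A K : ℝ) : ∃ C, ∀ ε ∈ Icc (0 : ℝ) 1, ∀ t ∈ Icc (-K) K,
    |twoModeRemainder μ A ε (sinh (μ * (1 + 3 * ε * A ^ 2 / (8 * μ ^ 2)) * t))
      (sinh (3 * μ * t))| ≤ C := by
  obtain ⟨C, hC⟩ := (isCompact_Icc.prod isCompact_Icc).exists_bound_of_continuousOn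
    (f := fun p : ℝ × ℝ => twoModeRemainder μ A p.1
      (sinh (μ * (1 + 3 * p.1 * A ^ 2 / (8 * μ ^ 2)) * p.2)) (sinh (3 * μ * p.2)))
    (s := Icc 0 1 ×ˢ Icc (-K) K) (by unfold twoModeRemainder; fun_prop)
  exact ⟨C, fun ε hε t ht => hC (ε, t) ⟨hε, ht⟩⟩

theorem two_mode_residual (μ A : ℝ) (hμ : 0 < μ)
    (q : ℝ → ℝ → ℝ)
    (hq : ∀ ε t, q ε t = A * Real.sinh (μ * (1 + 3 * ε * A^2 / (8 * μ^2)) * t)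
        - (ε * A^3 / (32 * μ^2)) * Real.sinh (3 * μ * t)) :
    ∃ R : ℝ → ℝ → ℝ,
      (∀ ε t, 0 < ε →
        deriv (deriv (q ε)) t - μ^2 * q ε t + ε * (q ε t)^3 = ε^2 * R ε t) ∧
      (∀ K : ℝ, 0 < K → ∃ C : ℝ, ∀ ε t, 0 < ε → ε ≤ 1 → |t| ≤ K →
        |R ε t| ≤ C) := by
  set κ := 9 * A ^ 2 / (8 * μ) with hκ
  have hfreq : ∀ ε t, 3 * (μ * (1 + 3 * ε * A ^ 2 / (8 * μ ^ 2)) * t) = (3 * μ + ε * κ) * t := by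
    intro ε t
    rw [hκ]
    field_simp
    ring
  refine ⟨fun ε t => twoModeRemainder μ A ε (sinh (μ * (1 + 3 * ε * A ^ 2 / (8 * μ ^ 2)) * t))
      (sinh (3 * μ * t)) + A ^ 3 / (4 * ε) * (sinh ((3 * μ + ε * κ) * t) - sinh (3 * μ * t)),
    fun ε t hε => ?_, fun K _ => ?_⟩
  · simp only [show q ε = _ from funext (hq ε), deriv_deriv_mul_sinh_sub_mul_sinh]
    rw [two_mode_residual_eq hμ.ne', hfreq]
    field_simp
  · obtain ⟨C, hC⟩ := exists_bound_twoModeRemainder μ A K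
    refine ⟨C + |A| ^ 3 / 4 * (κ * K * cosh ((3 * μ + κ) * K)), fun ε t hε hε₁ ht => ?_⟩
    have hP := hC ε ⟨hε.le, hε₁⟩ t (abs_le.1 ht)
    have hD := abs_sinh_add_mul_sub_sinh_le (μ := 3 * μ) (κ := κ) (by positivity) (by positivity)
      hε.le hε₁ ht
    calc _ ≤ _ + |A ^ 3 / (4 * ε)| * _ := (abs_add_le _ _).trans_eq (by rw [abs_mul])
      _ ≤ C + |A| ^ 3 / (4 * ε) * (ε * (κ * K * cosh ((3 * μ + κ) * K))) := by
        rw [abs_div, abs_pow, abs_of_pos (by positivity : 0 < 4 * ε)]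
        gcongr
      _ = _ := by field_simp
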